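/- arXiv:2604.26058 — 5 statements merged into one kernel-verified Lean document; each statement's English description precedes it below -/
import Mathlib

section
/- Let L be an r-lattice and S a multiplicatively closed subset. If every element of L is S-compact, then every ascending chain b₁ ≤ b₂ ≤ ⋯ in L is S-stationary: there exist s ∈ S and n such that s·bₘ ≤ bₙ for all m ≥ n. -/
open CompleteLattice

class MulLattice (L : Type*) extends CompleteLattice L, CommMonoid L where
  mul_sSup : ∀ (a : L) (s : Set L), a * sSup s = ⨆ b ∈ s, a * b
  one_eq_top : (1 : L) = ⊤

variable {L : Type*} [MulLattice L]

/-- Residual `(a : b)`. -/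
def mres (a b : L) : L := sSup {x : L | x * b ≤ a}

/-- Lattice-theoretic radical. -/
def rad (a : L) : L :=
  sSup {x : L | IsCompactElement x ∧ ∃ n : ℕ, 0 < n ∧ x ^ n ≤ a}

def IsMeetPrincipal (m : L) : Prop :=
  ∀ a b : L, a ⊓ m * b = m * (mres a m ⊓ b)

def IsJoinPrincipal (m : L) : Prop :=
  ∀ a b : L, a ⊔ mres b m = mres (a * m ⊔ b) m

def IsPrincipal (m : L) : Prop := IsMeetPrincipal m ∧ IsJoinPrincipal m

/-- A multiplicatively closed subset of compact elements with `1 ∈ S`, `0 ∉ S`. -/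
def MultClosed (S : Set L) : Prop :=
  (∀ s ∈ S, IsCompactElement s) ∧ (1 : L) ∈ S ∧ (⊥ : L) ∉ S ∧
    ∀ s ∈ S, ∀ t ∈ S, s * t ∈ S

def SCompact (S : Set L) (a : L) : Prop :=
  ∃ s ∈ S, ∃ b : L, IsCompactElement b ∧ s * a ≤ b ∧ b ≤ a

def SPrime (S : Set L) (p : L) : Prop :=
  p ≠ ⊤ ∧ (∀ t ∈ S, ¬ t ≤ p) ∧
    ∃ s ∈ S, ∀ a b : L, a * b ≤ p → s * a ≤ p ∨ s * b ≤ p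

def SPrimary (S : Set L) (q : L) : Prop :=
  q ≠ ⊤ ∧ (∀ t ∈ S, ¬ t ≤ q) ∧
    ∃ s ∈ S, ∀ c d : L, c * d ≤ q → s * c ≤ q ∨ s * d ≤ rad q

def Ssat (S : Set L) (a : L) : L := sSup {x : L | ∃ s ∈ S, s * x ≤ a}

class RLattice (L : Type*) extends MulLattice L where
  modular : ∀ a b c : L, a ≤ c → a ⊔ (b ⊓ c) = (a ⊔ b) ⊓ c
  principally_generated : ∀ a : L, a = sSup {m : L | IsPrincipal m ∧ m ≤ a}
  compactly_generated : ∀ a : L, a = sSup {c : L | IsCompactElement c ∧ c ≤ a}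
  top_compact : IsCompactElement (⊤ : L)

class CLattice (L : Type*) extends MulLattice L where
  compactly_generated : ∀ a : L, a = sSup {c : L | IsCompactElement c ∧ c ≤ a}
  top_compact : IsCompactElement (⊤ : L)
  compact_mul : ∀ a b : L, IsCompactElement a → IsCompactElement b →
    IsCompactElement (a * b)


lemma mul_le_mul_left'' {L : Type*} [MulLattice L] (a : L) {x y : L} (hxy : x ≤ y) :
    a * x ≤ a * y := by
  have h : a * sSup {x, y} = ⨆ b ∈ ({x, y} : Set L), a * b := MulLattice.mul_sSup a _
  have hs : sSup ({x, y} : Set L) = y := by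
    simp [sSup_insert, sup_eq_right.mpr hxy]
  rw [hs] at h
  rw [h]
  exact le_biSup _ (Set.mem_insert x {y})

theorem stmt7 {L : Type*} [RLattice L] (S : Set L) (hS : MultClosed S)
    (h : ∀ a : L, SCompact S a) (b : ℕ → L) (hb : Monotone b) :
    ∃ s ∈ S, ∃ n : ℕ, ∀ m ≥ n, s * b m ≤ b n := by
  obtain ⟨s, hsS, c, hc, hsc, hca⟩ := h (⨆ m, b m)
  have hdir : DirectedOn (· ≤ ·) (Set.range b) := (directed_of_isDirected_le hb).directedOn_range
  obtain ⟨x, hx, hcx⟩ := (isCompactElement_iff_le_of_directed_sSup_le L c).mp hc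
    (Set.range b) ⟨b 0, Set.mem_range_self 0⟩ hdir
    (by rw [sSup_range]; exact hca)
  obtain ⟨n, rfl⟩ := hx
  refine ⟨s, hsS, n, fun m hm => ?_⟩
  calc s * b m ≤ s * ⨆ m, b m := mul_le_mul_left'' s (le_iSup b m)
    _ ≤ c := hsc
    _ ≤ b n := hcx
end

section
/- Let L be an r-lattice and S a multiplicatively closed subset. If every non-empty subset of L has an S-maximal element, then every element of L is S-compact. -/
open CompleteLattice

variable {L : Type*} [MulLattice L]

lemma myBotCompact {L : Type*} [CompleteLattice L] : IsCompactElement (⊥ : L) := by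
  intro s hs
  intro hne _ _ _
  obtain ⟨y, hy⟩ := hne
  exact ⟨y, hy, bot_le⟩

lemma mySupCompact {L : Type*} [CompleteLattice L] {a b : L}
    (ha : IsCompactElement a) (hb : IsCompactElement b) : IsCompactElement (a ⊔ b) := by
  classical
  have := CompleteLattice.isCompactElement_finsetSup (f := (id : L → L)) ({a, b} : Finset L)
    (by intro x hx; simp only [Finset.mem_insert, Finset.mem_singleton] at hx
        rcases hx with rfl | rfl <;> simpa)
  simpa using this

lemma myMulMono {L : Type*} [MulLattice L] (a : L) {b c : L} (h : b ≤ c) : a * b ≤ a * c := by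
  have : a * (b ⊔ c) = (a * b) ⊔ (a * c) := by
    rw [show b ⊔ c = sSup {b, c} by simp, MulLattice.mul_sSup, iSup_pair]
  have h2 : b ⊔ c = c := sup_eq_right.mpr h
  calc a * b ≤ (a * b) ⊔ (a * c) := le_sup_left
    _ = a * (b ⊔ c) := this.symm
    _ = a * c := by rw [h2]

theorem stmt9 {L : Type*} [RLattice L] (S : Set L) (hS : MultClosed S)
    (h : ∀ T : Set L, T.Nonempty → ∃ m ∈ T, ∃ s ∈ S, ∀ a ∈ T, m ≤ a → s * a ≤ m)
    (x : L) : SCompact S x := by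
  classical
  set T : Set L := {c : L | IsCompactElement c ∧ c ≤ x} with hT
  have hne : T.Nonempty := ⟨⊥, myBotCompact, bot_le⟩
  obtain ⟨m, hmT, s, hsS, hmax⟩ := h T hne
  refine ⟨s, hsS, m, hmT.1, ?_, hmT.2⟩
  have hx : x = sSup T := RLattice.compactly_generated x
  have : s * x = ⨆ c ∈ T, s * c := by rw [hx, MulLattice.mul_sSup]
  rw [this]
  refine iSup_le fun c => iSup_le fun hcT => ?_
  have hma : (m ⊔ c) ∈ T := ⟨mySupCompact hmT.1 hcT.1, sup_le hmT.2 hcT.2⟩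
  have := hmax (m ⊔ c) hma le_sup_left
  exact le_trans (myMulMono s le_sup_right) this
end

section
/- Cohen–Kaplansky S-version: Let S be a multiplicatively closed subset of an r-lattice L. Then L is S-Noetherian (every element is S-compact) if and only if every S-prime element of L is S-compact. -/
open CompleteLattice

variable {L : Type*} [MulLattice L]

/-!
Suppose some element is not `S`-compact. The non-`S`-compact elements are closed under joins of
chains (a compact element below such a join lies below a member of the chain), so by Zorn there is
a maximal one, `p`. If `a * b ≤ p` with `a, b ≰ p`, pick a principal `m ≤ a` with `m ≰ p`; then
`p ⊔ m` and `(p : m) ≥ p ⊔ b` lie strictly above `p`, hence are `S`-compact. Write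
`s (p ⊔ m) ≤ c` and choose a compact `e ≤ p` with `c ≤ e ⊔ m`; modularity gives
`s p ≤ e ⊔ (m ⊓ p) = e ⊔ m (p : m)`, and
`t (p : m) ≤ d` then gives `t s p ≤ e ⊔ m d ≤ p`, where `m d` is compact because `m` is principal.
So `p` would be `S`-compact; hence `p` is prime, in particular `S`-prime, a contradiction.
-/

open Quantale

section CompactElements

variable {α : Type*} [CompleteLattice α]

lemma isCompactElement_bot : IsCompactElement (⊥ : α) := by
  simpa using isCompactElement_finsetSup (f := id) (∅ : Finset α) (by simp)

lemma IsCompactElement.sup {a b : α} (ha : IsCompactElement a) (hb : IsCompactElement b) :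
    IsCompactElement (a ⊔ b) := by
  classical
  simpa using isCompactElement_finsetSup (f := id) {a, b} (by simp [ha, hb])

lemma IsCompactElement.exists_le_sup_of_le_sup [IsCompactlyGenerated α] {c p m : α}
    (hc : IsCompactElement c) (h : c ≤ p ⊔ m) :
    ∃ e, IsCompactElement e ∧ e ≤ p ∧ c ≤ e ⊔ m := by
  let K := {e : α // IsCompactElement e ∧ e ≤ p}
  have hK : c ≤ ⨆ e : K, (e : α) ⊔ m := by
    refine h.trans (sup_le ?_ ?_)
    · exact (sSup_compact_le_eq p).ge.trans
        (sSup_le fun e he => le_iSup_of_le ⟨e, he⟩ le_sup_left)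
    · exact le_iSup_of_le ⟨⊥, isCompactElement_bot, bot_le⟩ le_sup_right
  obtain ⟨s, hs⟩ := hc.exists_finset_of_le_iSup _ _ hK
  refine ⟨s.sup (↑), isCompactElement_finsetSup s fun e _ => e.2.1,
    Finset.sup_le fun e _ => e.2.2, hs.trans ?_⟩
  exact iSup₂_le fun e he => sup_le_sup_right (Finset.le_sup (f := Subtype.val) he) m

end CompactElements

instance MulLattice.isQuantale : IsQuantale L where
  mul_sSup_distrib := MulLattice.mul_sSup
  sSup_mul_distrib s y := by
    simp_rw [mul_comm _ y]
    exact MulLattice.mul_sSup y s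

lemma MulLattice.le_one (a : L) : a ≤ 1 :=
  MulLattice.one_eq_top (L := L) ▸ le_top

lemma MulLattice.mul_le_left (a b : L) : a * b ≤ a :=
  mul_le_of_le_one_right' (le_one b)

lemma MulLattice.mul_le_right (a b : L) : a * b ≤ b :=
  mul_le_of_le_one_left' (le_one a)

open MulLattice

lemma le_mres_iff {x a b : L} : x ≤ mres a b ↔ x * b ≤ a :=
  leftMulResiduation_le_iff_mul_le

lemma mres_mul_le (a b : L) : mres a b * b ≤ a :=
  le_mres_iff.mp le_rfl

lemma le_mres_self (a b : L) : a ≤ mres a b :=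
  le_mres_iff.mpr (mul_le_left a b)

lemma mres_mono {a a' : L} (h : a ≤ a') (b : L) : mres a b ≤ mres a' b :=
  le_mres_iff.mpr ((mres_mul_le a b).trans h)

lemma IsMeetPrincipal.inf_eq_mul_mres {m : L} (hm : IsMeetPrincipal m) (a : L) :
    m ⊓ a = m * mres a m := by
  have h := hm a 1
  rwa [mul_one, MulLattice.one_eq_top, inf_top_eq, inf_comm] at h

lemma IsJoinPrincipal.mres_mul_self {m : L} (hm : IsJoinPrincipal m) (z : L) :
    mres (z * m) m = z ⊔ mres ⊥ m := by
  simpa using (hm z ⊥).symm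

lemma IsPrincipal.isCompactElement_mul [IsCompactlyGenerated L] {m d : L} (hm : IsPrincipal m)
    (hd : IsCompactElement d) : IsCompactElement (m * d) := by
  rw [isCompactElement_iff_le_of_directed_sSup_le]
  intro A hne hdir hle
  set z := ⨆ a ∈ A, mres a m
  have hmd : m * d ≤ m * z := calc
    m * d = sSup A ⊓ m * d := (inf_eq_right.mpr hle).symm
    _ = ⨆ a ∈ A, m * (mres a m ⊓ d) := by
      rw [hdir.sSup_inf_eq]
      exact iSup_congr fun a => iSup_congr fun _ => hm.1 a d
    _ ≤ m * z := iSup₂_le fun a ha =>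
      mul_le_mul_right (inf_le_left.trans (le_biSup (mres · m) ha)) m
  have hdz : d ≤ z := calc
    d ≤ mres (z * m) m := le_mres_iff.mpr (by rwa [mul_comm d, mul_comm z])
    _ = z ⊔ mres ⊥ m := hm.2.mres_mul_self z
    _ = z := sup_eq_left.mpr <| hne.elim fun a ha =>
      (mres_mono bot_le m).trans (le_biSup (mres · m) ha)
  have hdir' : DirectedOn (· ≤ ·) ((mres · m) '' A) :=
    hdir.mono_comp fun _ _ h => mres_mono h m
  obtain ⟨_, ⟨a, ha, rfl⟩, hda⟩ := (isCompactElement_iff_le_of_directed_sSup_le L d).mp hd _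
    (hne.image _) hdir' (by rwa [sSup_image])
  exact ⟨a, ha, mul_comm m d ▸ le_mres_iff.mp hda⟩

section SCompact

variable {S : Set L}

lemma SCompact.exists_mem_of_directedOn {A : Set L} (hA : A.Nonempty)
    (hdir : DirectedOn (· ≤ ·) A) (h : SCompact S (sSup A)) : ∃ a ∈ A, SCompact S a := by
  obtain ⟨s, hs, b, hb, hsb, hbA⟩ := h
  obtain ⟨a, ha, hba⟩ := (isCompactElement_iff_le_of_directed_sSup_le L b).mp hb A hA hdir hbA
  exact ⟨a, ha, s, hs, b, hb, (mul_le_mul_right (le_sSup ha) s).trans hsb, hba⟩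

lemma exists_maximal_not_sCompact {a : L} (ha : ¬ SCompact S a) :
    ∃ p, Maximal (fun x => ¬ SCompact S x) p := by
  have hchain : ∀ c ⊆ {x | ¬ SCompact S x}, IsChain (· ≤ ·) c → ∀ y ∈ c,
      ∃ ub ∈ {x | ¬ SCompact S x}, ∀ z ∈ c, z ≤ ub := fun c hc hchain y hy =>
    ⟨sSup c, fun h => (h.exists_mem_of_directedOn ⟨y, hy⟩ hchain.directedOn).elim
      fun x hx => hc hx.1 hx.2, fun _ hz => le_sSup hz⟩
  obtain ⟨p, -, hp⟩ := zorn_le_nonempty₀ _ hchain a ha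
  exact ⟨p, hp⟩

lemma SCompact.of_sup_of_mres [IsCompactlyGenerated L] [IsModularLattice L]
    (hS : ∀ s ∈ S, ∀ t ∈ S, s * t ∈ S) {p m : L} (hm : IsPrincipal m)
    (hsup : SCompact S (p ⊔ m)) (hres : SCompact S (mres p m)) : SCompact S p := by
  obtain ⟨s, hs, c, hc, hsc, hcp⟩ := hsup
  obtain ⟨t, ht, d, hd, htd, hdr⟩ := hres
  obtain ⟨e, he, hep, hce⟩ := hc.exists_le_sup_of_le_sup hcp
  have hsp : s * p ≤ e ⊔ m * mres p m := calc
    s * p ≤ (e ⊔ m) ⊓ p :=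
      le_inf ((mul_le_mul_right le_sup_left s).trans (hsc.trans hce)) (mul_le_right s p)
    _ = e ⊔ m * mres p m := by rw [sup_inf_assoc_of_le m hep, hm.1.inf_eq_mul_mres]
  refine ⟨t * s, hS t ht s hs, e ⊔ m * d, he.sup (hm.isCompactElement_mul hd), ?_,
    sup_le hep ((mul_le_mul_right hdr m).trans (mul_comm m _ ▸ mres_mul_le p m))⟩
  calc t * s * p ≤ t * (e ⊔ m * mres p m) := mul_assoc t s p ▸ mul_le_mul_right hsp t
    _ = t * e ⊔ m * (t * mres p m) := by rw [mul_sup_distrib, mul_left_comm]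
    _ ≤ e ⊔ m * d := sup_le_sup (mul_le_right t e) (mul_le_mul_right htd m)

end SCompact

section RLattice

variable {L : Type*} [RLattice L]

instance RLattice.isCompactlyGenerated : IsCompactlyGenerated L :=
  ⟨fun a => ⟨_, fun _ h => h.1, (RLattice.compactly_generated a).symm⟩⟩

instance RLattice.isModularLattice : IsModularLattice L :=
  ⟨fun y _ h => (RLattice.modular _ y _ h).ge⟩

lemma RLattice.exists_isPrincipal_le_not_le {a p : L} (h : ¬ a ≤ p) :
    ∃ m, IsPrincipal m ∧ m ≤ a ∧ ¬ m ≤ p := by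
  by_contra! hall
  exact h ((RLattice.principally_generated a).le.trans (sSup_le fun m hm => hall m hm.1 hm.2))

variable {S : Set L}

lemma le_or_le_of_maximal_not_sCompact (hS : ∀ s ∈ S, ∀ t ∈ S, s * t ∈ S) {p : L}
    (hp : Maximal (fun x => ¬ SCompact S x) p) {a b : L} (hab : a * b ≤ p) : a ≤ p ∨ b ≤ p := by
  by_contra! h
  obtain ⟨hap, hbp⟩ := h
  obtain ⟨m, hm, hma, hmp⟩ := RLattice.exists_isPrincipal_le_not_le hap
  have hbm : b ≤ mres p m :=
    le_mres_iff.mpr ((mul_le_mul_right hma b).trans (mul_comm a b ▸ hab))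
  have above : ∀ q, p ≤ q → ¬ q ≤ p → SCompact S q := fun q hpq hqp =>
    not_not.mp (hp.not_prop_of_gt (hpq.lt_of_not_ge hqp))
  exact hp.prop <| SCompact.of_sup_of_mres hS hm
    (above _ le_sup_left fun h => hmp (le_sup_right.trans h))
    (above _ (le_mres_self p m) fun h => hbp (hbm.trans h))

lemma sPrime_of_maximal_not_sCompact (hS : MultClosed S) {p : L}
    (hp : Maximal (fun x => ¬ SCompact S x) p) : SPrime S p := by
  obtain ⟨hcompact, hone, -, hmul⟩ := hS
  refine ⟨?_, fun t ht htp => hp.prop ⟨t, ht, t, hcompact t ht, mul_le_left t p, htp⟩, 1, hone,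
    fun a b hab => by simpa only [one_mul] using le_or_le_of_maximal_not_sCompact hmul hp hab⟩
  rintro rfl
  exact hp.prop ⟨1, hone, ⊤, RLattice.top_compact, (one_mul ⊤).le, le_rfl⟩

end RLattice

/-- Cohen–Kaplansky S-version. -/
theorem stmt11 {L : Type*} [RLattice L] (S : Set L) (hS : MultClosed S) :
    (∀ a : L, SCompact S a) ↔ (∀ p : L, SPrime S p → SCompact S p) := by
  refine ⟨fun h p _ => h p, fun hprime a => ?_⟩
  by_contra ha
  obtain ⟨p, hp⟩ := exists_maximal_not_sCompact ha
  exact hp.prop (hprime p (sPrime_of_maximal_not_sCompact hS hp))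
end

section
/- In a c-lattice L, a finite meet of S-p-primary elements (all with the same S-prime radical p) is again S-p-primary. -/
open CompleteLattice

variable {L : Type*} [MulLattice L]

section Helpers

lemma my_mul_sup (a b c : L) : a * (b ⊔ c) = a * b ⊔ a * c := by
  have h1 := MulLattice.mul_sSup a {b, c}
  rw [sSup_pair] at h1
  rw [h1]
  exact iSup_pair

lemma my_mul_mono_right {a b c : L} (h : b ≤ c) : a * b ≤ a * c := by
  have h1 : a * c = a * b ⊔ a * c := by
    rw [← my_mul_sup, sup_eq_right.mpr h]
  rw [h1]; exact le_sup_left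

lemma my_mul_mono_left {a b c : L} (h : b ≤ c) : b * a ≤ c * a := by
  rw [mul_comm b a, mul_comm c a]; exact my_mul_mono_right h

lemma my_mul_le_left {a b : L} : a * b ≤ a := by
  have := my_mul_mono_right (a := a) (le_top : b ≤ ⊤)
  rwa [← MulLattice.one_eq_top, mul_one] at this

lemma my_mul_le_right {a b : L} : a * b ≤ b := by
  rw [mul_comm]; exact my_mul_le_left

lemma my_pow_anti {c : L} {m k : ℕ} (h : m ≤ k) : c ^ k ≤ c ^ m := by
  obtain ⟨d, rfl⟩ := Nat.exists_eq_add_of_le h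
  rw [pow_add]; exact my_mul_le_left

lemma my_pow_mono {c d : L} (h : c ≤ d) : ∀ m : ℕ, c ^ m ≤ d ^ m := by
  intro m
  induction m with
  | zero => simp
  | succ k ih =>
    rw [pow_succ, pow_succ]
    exact le_trans (my_mul_mono_left ih) (my_mul_mono_right h)

lemma my_mul_iSup {ι : Sort*} (a : L) (f : ι → L) : a * (⨆ i, f i) = ⨆ i, a * f i := by
  rw [iSup, MulLattice.mul_sSup]
  rw [iSup_range]

lemma my_sup_pow_le {x y a : L} {m k : ℕ} (hx : x ^ m ≤ a) (hy : y ^ k ≤ a) :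
    (x ⊔ y) ^ (m + k) ≤ a := by
  have key : ∀ N : ℕ, (x ⊔ y) ^ N ≤ ⨆ i : Fin (N + 1), x ^ (i : ℕ) * y ^ (N - (i : ℕ)) := by
    intro N
    induction N with
    | zero =>
      refine le_trans (le_of_eq (pow_zero _)) ?_
      exact le_iSup_of_le (0 : Fin 1) (by simp)
    | succ N ih =>
      rw [pow_succ]
      refine le_trans (my_mul_mono_left ih) ?_
      rw [mul_comm, my_mul_iSup]
      apply iSup_le
      intro i
      rw [mul_comm, my_mul_sup]
      apply sup_le
      · -- x^i * y^(N-i) * x ≤ term at i+1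
        refine le_iSup_of_le (Fin.succ i) ?_
        have : x ^ (i : ℕ) * y ^ (N - (i : ℕ)) * x = x ^ ((i : ℕ) + 1) * y ^ (N + 1 - ((i : ℕ) + 1)) := by
          rw [pow_succ]
          have : N + 1 - ((i : ℕ) + 1) = N - (i : ℕ) := by omega
          rw [this]
          exact mul_right_comm _ _ _
        rw [this]
        simp [Fin.val_succ]
      · refine le_iSup_of_le (Fin.castSucc i) ?_
        have hi : (i : ℕ) ≤ N := Nat.lt_succ_iff.mp i.isLt
        have : x ^ (i : ℕ) * y ^ (N - (i : ℕ)) * y = x ^ (i : ℕ) * y ^ (N + 1 - (i : ℕ)) := by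
          rw [mul_assoc, ← pow_succ]
          have : N + 1 - (i : ℕ) = (N - (i : ℕ)) + 1 := by omega
          rw [this]
        rw [this]
        simp [Fin.coe_castSucc]
  refine le_trans (key (m + k)) (iSup_le fun i => ?_)
  rcases le_or_gt m (i : ℕ) with h | h
  · exact le_trans my_mul_le_left (le_trans (my_pow_anti h) hx)
  · have : k ≤ m + k - (i : ℕ) := by omega
    exact le_trans my_mul_le_right (le_trans (my_pow_anti this) hy)

variable {L' : Type*} [CLattice L']

lemma my_compact_le_rad {c a : L'} (hc : IsCompactElement c) (h : c ≤ rad a) :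
    ∃ m : ℕ, 0 < m ∧ c ^ m ≤ a := by
  obtain ⟨t, hts, hle⟩ := (isCompactElement_iff_exists_le_sSup_of_le_sSup (k := c)).mp hc _ h
  have main : ∀ t : Finset L', ↑t ⊆ {x : L' | IsCompactElement x ∧ ∃ n : ℕ, 0 < n ∧ x ^ n ≤ a} →
      ∃ m : ℕ, 0 < m ∧ (t.sup id) ^ m ≤ a := by
    classical
    intro t
    induction t using Finset.induction_on with
    | empty => exact fun _ => ⟨1, one_pos, by simp⟩
    | insert b u hx ih =>
      intro hsub
      obtain ⟨m, hm, hma⟩ := ih (fun z hz => hsub (by simp [hz]))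
      obtain ⟨-, k, hk, hka⟩ := hsub (Finset.mem_insert_self _ _)
      refine ⟨k + m, by omega, ?_⟩
      rw [Finset.sup_insert]
      exact my_sup_pow_le hka hma
  obtain ⟨m, hm, hle'⟩ := main t hts
  exact ⟨m, hm, le_trans (my_pow_mono hle m) hle'⟩

lemma my_le_rad (a : L') : a ≤ rad a := by
  conv_lhs => rw [CLattice.compactly_generated a]
  apply sSup_le_sSup
  rintro x ⟨hx, hxa⟩
  exact ⟨hx, 1, one_pos, by simpa⟩

lemma my_rad_mono {a b : L'} (h : a ≤ b) : rad a ≤ rad b := by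
  apply sSup_le_sSup
  rintro x ⟨hx, n, hn, hxa⟩
  exact ⟨hx, n, hn, le_trans hxa h⟩

end Helpers

/-- A finite meet of S-p-primary elements is S-p-primary. -/
theorem stmt13 {L : Type*} [CLattice L] (S : Set L) (hS : MultClosed S)
    (p : L) (hp : SPrime S p) (n : ℕ) (hn : 0 < n) (q : Fin n → L)
    (hq : ∀ i, SPrimary S (q i) ∧ rad (q i) = p) :
    SPrimary S (⨅ i, q i) ∧ rad (⨅ i, q i) = p := by
  have i₀ : Fin n := ⟨0, hn⟩
  -- radical part first
  have hrad : rad (⨅ i, q i) = p := by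
    apply le_antisymm
    · rw [← (hq i₀).2]
      exact my_rad_mono (iInf_le q i₀)
    · conv_lhs => rw [CLattice.compactly_generated p]
      apply _root_.sSup_le
      rintro c ⟨hc, hcp⟩
      have hm : ∀ i : Fin n, ∃ m : ℕ, 0 < m ∧ c ^ m ≤ q i := by
        intro i
        exact my_compact_le_rad hc (by rw [(hq i).2]; exact hcp)
      choose m hmpos hmle using hm
      set M := Finset.univ.sup m with hM
      have hMi : ∀ i, m i ≤ M := fun i => Finset.le_sup (Finset.mem_univ i)
      have hMpos : 0 < M := lt_of_lt_of_le (hmpos i₀) (hMi i₀)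
      have : c ^ M ≤ ⨅ i, q i := by
        apply le_iInf
        intro i
        exact le_trans (my_pow_anti (hMi i)) (hmle i)
      exact le_sSup ⟨hc, M, hMpos, this⟩
  refine ⟨⟨?_, ?_, ?_⟩, hrad⟩
  · intro h
    have : q i₀ = ⊤ := top_le_iff.mp (le_trans (le_of_eq h.symm) (iInf_le q i₀))
    exact (hq i₀).1.1 this
  · intro t ht hle
    exact (hq i₀).1.2.1 t ht (le_trans hle (iInf_le q i₀))
  · -- witness
    choose s hsS hsprop using fun i => (hq i).1.2.2
    refine ⟨∏ i, s i, ?_, ?_⟩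
    · apply Finset.prod_induction _ (· ∈ S) (fun a b ha hb => hS.2.2.2 a ha b hb) hS.2.1
      intro i _
      exact hsS i
    · intro c d hcd
      have hprod_le : ∀ i, (∏ j, s j) ≤ s i := by
        intro i
        rw [← Finset.mul_prod_erase Finset.univ s (Finset.mem_univ i)]
        exact my_mul_le_left
      by_cases hall : ∀ i, s i * c ≤ q i
      · left
        apply le_iInf
        intro i
        exact le_trans (my_mul_mono_left (hprod_le i)) (hall i)
      · right
        push_neg at hall
        obtain ⟨i, hi⟩ := hall
        have := (hsprop i c d (le_trans hcd (iInf_le q i))).resolve_left hi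
        rw [(hq i).2, ← hrad] at this
        exact le_trans (my_mul_mono_left (hprod_le i)) this
end

section
/- Let L be a c-lattice and S a multiplicatively closed subset. If p is an S-prime element of L, then its S-saturation p_S = ⋁{x ∈ L | s·x ≤ p for some s ∈ S} is a prime element of L. -/
open CompleteLattice

variable {L : Type*} [MulLattice L]

/-! Elements `x` with `s * x ≤ a` for some `s ∈ S` form a directed set whose supremum is
`Ssat S a` (directed because `S` is multiplicatively closed), so a compact element below
`Ssat S a` is already annihilated into `a` by a single `t ∈ S`. For compact `a`, `b` with
`a * b ≤ Ssat S p` this gives `(t * a) * b ≤ p`, and the `s` witnessing `S`-primeness yields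
`(s * t) * a ≤ p` or `s * b ≤ p`. -/

namespace MulLattice

theorem mul_sup (a b c : L) : a * (b ⊔ c) = a * b ⊔ a * c := by
  rw [← sSup_pair, mul_sSup, iSup_insert, iSup_singleton]

instance : IsOrderedMonoid L where
  mul_le_mul_left b c h a := by
    rw [mul_comm b, mul_comm c, ← sup_eq_right.mpr h, mul_sup]
    exact le_sup_left

theorem le_one_s18 (a : L) : a ≤ 1 := one_eq_top (L := L) ▸ le_top

theorem mul_le_left_s18 (a b : L) : a * b ≤ a := mul_le_of_le_one_right' (le_one_s18 b)

theorem mul_le_right_s18 (a b : L) : a * b ≤ b := mul_le_of_le_one_left' (le_one_s18 a)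

theorem mul_top (a : L) : a * ⊤ = a := by
  rw [← one_eq_top, mul_one]

end MulLattice

section Saturation

variable {S : Set L}

theorem le_ssat_of_mul_le {s a x : L} (hs : s ∈ S) (h : s * x ≤ a) : x ≤ Ssat S a :=
  le_sSup ⟨s, hs, h⟩

theorem directedOn_mul_le (hS : ∀ s ∈ S, ∀ t ∈ S, s * t ∈ S) (a : L) :
    DirectedOn (· ≤ ·) {x : L | ∃ s ∈ S, s * x ≤ a} := by
  rintro x ⟨s, hs, hsx⟩ y ⟨t, ht, hty⟩
  refine ⟨x ⊔ y, ⟨s * t, hS s hs t ht, ?_⟩, le_sup_left, le_sup_right⟩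
  rw [MulLattice.mul_sup]
  exact sup_le ((mul_le_mul_left (MulLattice.mul_le_left_s18 s t) x).trans hsx)
    ((mul_le_mul_left (MulLattice.mul_le_right_s18 s t) y).trans hty)

theorem CompleteLattice.IsCompactElement.exists_mul_le_of_le_ssat (hS1 : 1 ∈ S)
    (hS : ∀ s ∈ S, ∀ t ∈ S, s * t ∈ S) {a x : L} (hx : IsCompactElement x)
    (h : x ≤ Ssat S a) : ∃ s ∈ S, s * x ≤ a := by
  have hne : {x : L | ∃ s ∈ S, s * x ≤ a}.Nonempty := ⟨⊥, 1, hS1, by rw [one_mul]; exact bot_le⟩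
  obtain ⟨y, ⟨s, hs, hsy⟩, hxy⟩ :=
    (isCompactElement_iff_le_of_directed_sSup_le L x).mp hx _ hne (directedOn_mul_le hS a) h
  exact ⟨s, hs, (mul_le_mul_right hxy s).trans hsy⟩

end Saturation

/-- The S-saturation of an S-prime element is prime. -/
theorem stmt18 {L : Type*} [CLattice L] (S : Set L) (hS : MultClosed S)
    (p : L) (hp : SPrime S p) :
    Ssat S p ≠ ⊤ ∧ ∀ a b : L, IsCompactElement a → IsCompactElement b →
      a * b ≤ Ssat S p → a ≤ Ssat S p ∨ b ≤ Ssat S p := by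
  obtain ⟨-, hS1, -, hSmul⟩ := hS
  obtain ⟨-, hSp, s, hs, hsp⟩ := hp
  refine ⟨fun htop => ?_, fun a b ha hb hab => ?_⟩
  · obtain ⟨t, ht, htp⟩ := CLattice.top_compact.exists_mul_le_of_le_ssat hS1 hSmul htop.ge
    exact hSp t ht (MulLattice.mul_top t ▸ htp)
  · obtain ⟨t, ht, htab⟩ :=
      (CLattice.compact_mul a b ha hb).exists_mul_le_of_le_ssat hS1 hSmul hab
    rcases hsp (t * a) b (mul_assoc t a b ▸ htab) with hsta | hsb
    · exact .inl (le_ssat_of_mul_le (hSmul s hs t ht) (mul_assoc s t a ▸ hsta))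
    · exact .inr (le_ssat_of_mul_le hs hsb)
end
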